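/- Fix nonnegative integers k, x₀, ℓ with 2k ≤ ℓ. For y with 0 ≤ y < ℓ − 2x₀, let z = ℓ − x₀ − y, s(y) = max(⌈(2k+1−y)/2⌉, 1), and define F(y) = Σ_{i=s(y)}^{x₀} Σ_{j=2k+1−2i}^{2k−i} (x₀ choose i)·(y choose j)·(z choose (2k−i−j)) (binomials are 0 for out-of-range indices). Then F(y) ≤ F(y+1). -/

import Mathlib

/-- Binomial coefficient on integers: `0` when the lower index is negative or
exceeds the upper index. -/
def ichoose (p q : ℤ) : ℤ :=
  if q < 0 ∨ p < q then 0 else (p.toNat).choose q.toNat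

/-- With `z = ℓ−x₀−y` and `s(y) = max(⌈(2k+1−y)/2⌉, 1)`:
`F(y) = Σ_{i=s(y)}^{x₀} Σ_{j=2k+1−2i}^{2k−i} (x₀ choose i)(y choose j)(z choose 2k−i−j)`. -/
noncomputable def F (k x₀ ℓ y : ℕ) : ℤ :=
  ∑ i ∈ Finset.Icc (max (((2 * k + 1 : ℤ) - y + 1) / 2) 1) (x₀ : ℤ),
    ∑ j ∈ Finset.Icc ((2 * k + 1 : ℤ) - 2 * i) ((2 * k : ℤ) - i),
      ichoose x₀ i * ichoose y j * ichoose ((ℓ : ℤ) - x₀ - y) ((2 * k : ℤ) - i - j)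

/-!
Passing from `y` to `y + 1` moves one element from the third part `z` to the second part.
For fixed `i`, Pascal's rule in both factors makes the inner sum telescope, so the inner sum
at `y + 1` exceeds the one at `y` by exactly `(y choose 2k−2i)·((z−1) choose (i−1)) ≥ 0`.
Moreover `s(y + 1) ≤ s(y)`, so `F(y + 1)` also has more (nonnegative) outer terms.
-/

lemma ichoose_nonneg (p q : ℤ) : 0 ≤ ichoose p q := by
  unfold ichoose
  split <;> positivity

lemma ichoose_of_neg (p : ℤ) {q : ℤ} (hq : q < 0) : ichoose p q = 0 :=
  if_pos (Or.inl hq)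

lemma ichoose_natCast (n : ℕ) {q : ℤ} (hq : 0 ≤ q) : ichoose n q = n.choose q.toNat := by
  unfold ichoose
  split_ifs with h
  · rw [Nat.choose_eq_zero_of_lt (by omega), Nat.cast_zero]
  · rfl

lemma ichoose_add_one (p q : ℤ) (hp : 0 ≤ p) :
    ichoose (p + 1) q = ichoose p q + ichoose p (q - 1) := by
  lift p to ℕ using hp
  rcases lt_trichotomy q 0 with hq | rfl | hq
  · simp only [ichoose_of_neg _ hq, ichoose_of_neg _ (show q - 1 < 0 by omega), add_zero]
  · rw [ichoose_of_neg _ (show (0 : ℤ) - 1 < 0 by omega), add_zero, ← Nat.cast_add_one,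
      ichoose_natCast _ le_rfl, ichoose_natCast _ le_rfl]
    simp
  · obtain ⟨r, rfl⟩ : ∃ r : ℕ, q = r + 1 := ⟨(q - 1).toNat, by omega⟩
    rw [add_sub_cancel_right, ← Nat.cast_add_one, ← Nat.cast_add_one,
      ichoose_natCast _ (Int.natCast_nonneg _), ichoose_natCast _ (Int.natCast_nonneg _),
      ichoose_natCast _ (Int.natCast_nonneg _)]
    simp only [Int.toNat_natCast]
    exact_mod_cast Nat.choose_succ_succ' p r |>.trans (add_comm _ _)

lemma Int.sum_Icc_sub_add_one {M : Type*} [AddCommGroup M] (f : ℤ → M) {a b : ℤ} (hab : a - 1 ≤ b) :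
    ∑ j ∈ Finset.Icc a b, (f j - f (j + 1)) = f a - f (b + 1) := by
  induction b, hab using Int.leInduction with
  | base => simp
  | succ b hab ih =>
    rw [← Finset.insert_Icc_right_eq_Icc_add_one (by omega), Finset.sum_insert (by simp), ih]
    abel

lemma sum_Icc_ichoose_add_one_mul (y z a m : ℤ) (hy : 0 ≤ y) (hz : 0 ≤ z) (ham : a - 1 ≤ m) :
    ∑ j ∈ Finset.Icc a m, ichoose (y + 1) j * ichoose z (m - j)
      = ∑ j ∈ Finset.Icc a m, ichoose y j * ichoose (z + 1) (m - j)
        + ichoose y (a - 1) * ichoose z (m - a) := by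
  set g : ℤ → ℤ := fun j ↦ ichoose y (j - 1) * ichoose z (m - j)
  have hterm : ∀ j, ichoose (y + 1) j * ichoose z (m - j) - ichoose y j * ichoose (z + 1) (m - j)
      = g j - g (j + 1) := fun j ↦ by
    simp only [g, ichoose_add_one _ _ hy, ichoose_add_one _ _ hz, add_sub_cancel_right,
      sub_add_eq_sub_sub]
    ring
  have hsum := Int.sum_Icc_sub_add_one g ham
  rw [← Finset.sum_congr rfl fun j _ ↦ hterm j, Finset.sum_sub_distrib] at hsum
  simp only [g, sub_add_cancel_left, ichoose_of_neg z (show (-1 : ℤ) < 0 by norm_num),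
    mul_zero, sub_zero] at hsum
  linarith

lemma sum_Icc_ichoose_mul_add_one_le (y z a m : ℤ) (hy : 0 ≤ y) (hz : 0 ≤ z) (ham : a - 1 ≤ m) :
    ∑ j ∈ Finset.Icc a m, ichoose y j * ichoose (z + 1) (m - j)
      ≤ ∑ j ∈ Finset.Icc a m, ichoose (y + 1) j * ichoose z (m - j) := by
  rw [sum_Icc_ichoose_add_one_mul y z a m hy hz ham]
  exact le_add_of_nonneg_right (mul_nonneg (ichoose_nonneg _ _) (ichoose_nonneg _ _))

theorem stmt_6_general (k x₀ ℓ y : ℕ)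
    (hy : y + 2 * x₀ < ℓ) :
    F k x₀ ℓ y ≤ F k x₀ ℓ (y + 1) := by
  obtain ⟨z, hz⟩ : ∃ z : ℕ, (ℓ : ℤ) - x₀ - y = z + 1 := ⟨ℓ - x₀ - y - 1, by omega⟩
  unfold F
  push_cast
  rw [hz, show (ℓ : ℤ) - x₀ - (y + 1) = z by omega]
  calc _ ≤ ∑ i ∈ Finset.Icc (max ((2 * (k : ℤ) + 1 - y + 1) / 2) 1) x₀,
          ∑ j ∈ Finset.Icc (2 * (k : ℤ) + 1 - 2 * i) (2 * k - i),
            ichoose x₀ i * ichoose (y + 1) j * ichoose z (2 * k - i - j) := by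
        refine Finset.sum_le_sum fun i hi ↦ ?_
        have hi0 : 0 ≤ i := by grind
        simp only [mul_assoc, ← Finset.mul_sum]
        exact mul_le_mul_of_nonneg_left (sum_Icc_ichoose_mul_add_one_le _ _ _ _
          (Int.natCast_nonneg y) (Int.natCast_nonneg z) (by omega)) (ichoose_nonneg _ _)
    _ ≤ _ := Finset.sum_le_sum_of_subset_of_nonneg (Finset.Icc_subset_Icc_left (by omega))
        fun _ _ _ ↦ Finset.sum_nonneg fun _ _ ↦
          mul_nonneg (mul_nonneg (ichoose_nonneg _ _) (ichoose_nonneg _ _)) (ichoose_nonneg _ _)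

theorem stmt_6 (k x₀ ℓ y : ℕ) (hkℓ : 2 * k ≤ ℓ)
    (hy : y + 2 * x₀ < ℓ) :
    F k x₀ ℓ y ≤ F k x₀ ℓ (y + 1) :=
  stmt_6_general k x₀ ℓ y hy
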